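/- arXiv:1210.5767 — 7 statements merged into one kernel-verified Lean document; each statement's English description precedes it below -/
import Mathlib

section
/- The operators E, F, K, K′ on V = ℂ^{n+1} satisfy: K and K′ are invertible and commute, K E = (r s^{−1}) E K, K′ E = (r^{−1} s) E K′, K F = (r^{−1} s) F K, K′ F = (r s^{−1}) F K′, and E F − F E = (K − K′)/(r − s). (That is, V_n is a representation of the two-parameter quantum group U_{r,s}(sl₂).) -/
/-- The two-parameter quantum integer `[m] = (r^m - s^m)/(r - s)`. -/
noncomputable def qint (r s : ℂ) (m : ℕ) : ℂ := (r ^ m - s ^ m) / (r - s)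

/-- The operator `E` on `V = ℂ^{n+1}`, `E v_i = [n+1-i] v_{i-1}` (with `v_{-1} = 0`). -/
noncomputable def Emat (n : ℕ) (r s : ℂ) : Matrix (Fin (n + 1)) (Fin (n + 1)) ℂ :=
  Matrix.of fun j i => if (j : ℕ) + 1 = (i : ℕ) then qint r s (n + 1 - (i : ℕ)) else 0

/-- The operator `F` on `V = ℂ^{n+1}`, `F v_i = [i+1] v_{i+1}` (with `v_{n+1} = 0`). -/
noncomputable def Fmat (n : ℕ) (r s : ℂ) : Matrix (Fin (n + 1)) (Fin (n + 1)) ℂ :=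
  Matrix.of fun j i => if (j : ℕ) = (i : ℕ) + 1 then qint r s ((i : ℕ) + 1) else 0

/-- The operator `K` on `V = ℂ^{n+1}`, `K v_i = r^{n-i} s^i v_i`. -/
noncomputable def Kmat (n : ℕ) (r s : ℂ) : Matrix (Fin (n + 1)) (Fin (n + 1)) ℂ :=
  Matrix.diagonal fun i => r ^ (n - (i : ℕ)) * s ^ (i : ℕ)

/-- The operator `K′` on `V = ℂ^{n+1}`, `K′ v_i = r^i s^{n-i} v_i`. -/
noncomputable def K'mat (n : ℕ) (r s : ℂ) : Matrix (Fin (n + 1)) (Fin (n + 1)) ℂ :=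
  Matrix.diagonal fun i => r ^ (i : ℕ) * s ^ (n - (i : ℕ))

/-!
`K` and `K′` are diagonal, with weights `r^(n-i) s^i` and `r^i s^(n-i)` on `v_i`, while `E`
and `F` shift the index by one. So each `K`-relation only compares the weights of neighbouring
basis vectors, and `E F`, `F E` are diagonal with entries `[i+1][n-i]` and `[i][n+1-i]` (the
boundary terms vanish because `[0] = 0`). The commutator relation is then the quantum-integer
identity `[a+1][b] - [a][b+1] = (r^b s^a - r^a s^b)/(r - s)` at `a = i`, `b = n - i`.
-/

open Matrix

theorem Fin.sum_ite_eq_val {M : Type*} [AddCommMonoid M] {N : ℕ} (m : ℕ) (f : Fin N → M) :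
    ∑ x : Fin N, (if m = (x : ℕ) then f x else 0) = if h : m < N then f ⟨m, h⟩ else 0 := by
  split_ifs with h
  · simp_rw [← Fin.ext_iff (a := ⟨m, h⟩), Finset.sum_ite_eq, Finset.mem_univ, if_true]
  · exact Finset.sum_eq_zero fun x _ => if_neg fun (hx : m = x) => h (hx ▸ x.isLt)

theorem Fin.sum_ite_val_add_one_eq {M : Type*} [AddCommMonoid M] {N : ℕ} (m : ℕ)
    (f : Fin N → M) :
    ∑ x : Fin N, (if (x : ℕ) + 1 = m then f x else 0)
      = if h : 0 < m ∧ m - 1 < N then f ⟨m - 1, h.2⟩ else 0 := by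
  by_cases hm : 0 < m
  · simp_rw [show ∀ x : ℕ, x + 1 = m ↔ m - 1 = x by omega, Fin.sum_ite_eq_val]
    simp [hm]
  · simp [show ∀ x : ℕ, x + 1 ≠ m by omega, hm]

theorem Matrix.diagonal_mul_eq_smul_mul_diagonal {ι R : Type*} [Fintype ι] [DecidableEq ι]
    [CommSemiring R] {d : ι → R} {A : Matrix ι ι R} {c : R}
    (h : ∀ i k, A i k ≠ 0 → d i = c * d k) :
    diagonal d * A = c • (A * diagonal d) := by
  ext i k
  rw [diagonal_mul, smul_apply, mul_diagonal, smul_eq_mul]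
  by_cases hA : A i k = 0
  · simp [hA]
  · rw [h i k hA]; ring

theorem qint_zero (r s : ℂ) : qint r s 0 = 0 := by simp [qint]

theorem qint_succ_mul_qint_sub_qint_mul_qint_succ {r s : ℂ} (hrs : r ≠ s) (a b : ℕ) :
    qint r s (a + 1) * qint r s b - qint r s a * qint r s (b + 1)
      = (r ^ b * s ^ a - r ^ a * s ^ b) / (r - s) := by
  have : r - s ≠ 0 := sub_ne_zero.mpr hrs
  simp only [qint]
  field_simp
  ring

variable {n : ℕ} {r s : ℂ}

theorem Emat_mul_Fmat :
    Emat n r s * Fmat n r s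
      = diagonal fun i : Fin (n + 1) => qint r s (i + 1) * qint r s (n - i) := by
  ext j i
  simp only [mul_apply, Emat, Fmat, of_apply, ite_mul, zero_mul, Fin.sum_ite_eq_val,
    diagonal_apply]
  rcases eq_or_ne j i with rfl | hji
  · by_cases hj : (j : ℕ) + 1 < n + 1
    · simp [hj, show n + 1 - (j + 1) = n - j by omega, mul_comm]
    · simp [hj, show n - (j : ℕ) = 0 by omega, qint_zero]
  · simp [hji, Fin.val_ne_of_ne hji]

theorem Fmat_mul_Emat :
    Fmat n r s * Emat n r s
      = diagonal fun i : Fin (n + 1) => qint r s i * qint r s (n + 1 - i) := by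
  ext j i
  simp only [mul_apply, Emat, Fmat, of_apply, mul_ite, mul_zero, Fin.sum_ite_val_add_one_eq,
    diagonal_apply]
  rcases eq_or_ne j i with rfl | hji
  · by_cases hj : 0 < (j : ℕ)
    · simp [hj, show (j : ℕ) - 1 + 1 = j by omega, show (j : ℕ) - 1 < n + 1 by omega]
    · simp [show (j : ℕ) = 0 by omega, qint_zero]
  · simp [hji]
    omega

theorem diagonal_mul_Emat {d : Fin (n + 1) → ℂ} {c : ℂ}
    (h : ∀ i k : Fin (n + 1), (i : ℕ) + 1 = k → d i = c * d k) :
    diagonal d * Emat n r s = c • (Emat n r s * diagonal d) :=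
  diagonal_mul_eq_smul_mul_diagonal fun i k hik => h i k (of_not_not fun h => hik (if_neg h))

theorem diagonal_mul_Fmat {d : Fin (n + 1) → ℂ} {c : ℂ}
    (h : ∀ i k : Fin (n + 1), (i : ℕ) = k + 1 → d i = c * d k) :
    diagonal d * Fmat n r s = c • (Fmat n r s * diagonal d) :=
  diagonal_mul_eq_smul_mul_diagonal fun i k hik => h i k (of_not_not fun h => hik (if_neg h))

theorem Kmat_mul_Emat (hs : s ≠ 0) :
    Kmat n r s * Emat n r s = (r * s⁻¹) • (Emat n r s * Kmat n r s) :=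
  diagonal_mul_Emat fun i k hik => by
    rw [show n - (i : ℕ) = n - k + 1 by omega, ← hik]
    field_simp
    ring

theorem K'mat_mul_Emat (hr : r ≠ 0) :
    K'mat n r s * Emat n r s = (r⁻¹ * s) • (Emat n r s * K'mat n r s) :=
  diagonal_mul_Emat fun i k hik => by
    rw [show n - (i : ℕ) = n - k + 1 by omega, ← hik]
    field_simp
    ring

theorem Kmat_mul_Fmat (hr : r ≠ 0) :
    Kmat n r s * Fmat n r s = (r⁻¹ * s) • (Fmat n r s * Kmat n r s) :=
  diagonal_mul_Fmat fun i k hik => by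
    rw [show n - (k : ℕ) = n - i + 1 by omega, hik]
    field_simp
    ring

theorem K'mat_mul_Fmat (hs : s ≠ 0) :
    K'mat n r s * Fmat n r s = (r * s⁻¹) • (Fmat n r s * K'mat n r s) :=
  diagonal_mul_Fmat fun i k hik => by
    rw [show n - (k : ℕ) = n - i + 1 by omega, hik]
    field_simp
    ring

theorem Emat_mul_Fmat_sub_Fmat_mul_Emat (hrs : r ≠ s) :
    Emat n r s * Fmat n r s - Fmat n r s * Emat n r s
      = (r - s)⁻¹ • (Kmat n r s - K'mat n r s) := by
  rw [Emat_mul_Fmat, Fmat_mul_Emat, Kmat, K'mat, diagonal_sub, diagonal_sub, ← diagonal_smul]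
  congr 1
  funext i
  rw [show n + 1 - (i : ℕ) = n - i + 1 by omega, qint_succ_mul_qint_sub_qint_mul_qint_succ hrs,
    Pi.smul_apply, smul_eq_mul, div_eq_inv_mul]

theorem isUnit_Kmat (hr : r ≠ 0) (hs : s ≠ 0) : IsUnit (Kmat n r s) :=
  isUnit_diagonal.mpr <| Pi.isUnit_iff.mpr fun _ =>
    (mul_ne_zero (pow_ne_zero _ hr) (pow_ne_zero _ hs)).isUnit

theorem isUnit_K'mat (hr : r ≠ 0) (hs : s ≠ 0) : IsUnit (K'mat n r s) :=
  isUnit_diagonal.mpr <| Pi.isUnit_iff.mpr fun _ =>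
    (mul_ne_zero (pow_ne_zero _ hr) (pow_ne_zero _ hs)).isUnit

/-- `V_n` is a representation of the two-parameter quantum group `U_{r,s}(sl₂)`:
`K, K′` are invertible and commute, `K E = (r s⁻¹) E K`, `K′ E = (r⁻¹ s) E K′`,
`K F = (r⁻¹ s) F K`, `K′ F = (r s⁻¹) F K′`, and `E F − F E = (K − K′)/(r − s)`. -/
theorem Vn_is_representation (n : ℕ) (r s : ℂ) (hr : r ≠ 0) (hs : s ≠ 0) (hrs : r ≠ s) :
    IsUnit (Kmat n r s) ∧ IsUnit (K'mat n r s) ∧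
    Kmat n r s * K'mat n r s = K'mat n r s * Kmat n r s ∧
    Kmat n r s * Emat n r s = (r * s⁻¹) • (Emat n r s * Kmat n r s) ∧
    K'mat n r s * Emat n r s = (r⁻¹ * s) • (Emat n r s * K'mat n r s) ∧
    Kmat n r s * Fmat n r s = (r⁻¹ * s) • (Fmat n r s * Kmat n r s) ∧
    K'mat n r s * Fmat n r s = (r * s⁻¹) • (Fmat n r s * K'mat n r s) ∧
    Emat n r s * Fmat n r s - Fmat n r s * Emat n r s
      = (r - s)⁻¹ • (Kmat n r s - K'mat n r s) :=
  ⟨isUnit_Kmat hr hs, isUnit_K'mat hr hs, (commute_diagonal _ _).eq, Kmat_mul_Emat hs,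
    K'mat_mul_Emat hr, Kmat_mul_Fmat hr, K'mat_mul_Fmat hs, Emat_mul_Fmat_sub_Fmat_mul_Emat hrs⟩
end

section
/- Assume in addition that r^k ≠ s^k for all 1 ≤ k ≤ n. Then the only subspaces of V = ℂ^{n+1} invariant under both E and F are the zero subspace and V itself; that is, the representation V_n of U_{r,s}(sl₂) is irreducible. -/
lemma qint_ne_zero {n : ℕ} {r s : ℂ} (hrs : r ≠ s)
    (hpow : ∀ k : ℕ, 1 ≤ k → k ≤ n → r ^ k ≠ s ^ k)
    {k : ℕ} (h1 : 1 ≤ k) (h2 : k ≤ n) : qint r s k ≠ 0 := by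
  unfold qint
  exact div_ne_zero (sub_ne_zero.mpr (hpow k h1 h2)) (sub_ne_zero.mpr hrs)

lemma Emat_mulVec {n : ℕ} (r s : ℂ) (x : Fin (n+1) → ℂ) (j : Fin (n+1)) (hj : (j:ℕ) < n) :
    (Emat n r s).mulVec x j = qint r s (n - (j:ℕ)) * x ⟨(j:ℕ)+1, by omega⟩ := by
  unfold Matrix.mulVec Emat
  simp only [Matrix.of_apply, dotProduct]
  rw [Finset.sum_eq_single (⟨(j:ℕ)+1, by omega⟩ : Fin (n+1))]
  · have h2 : n + 1 - ((j:ℕ)+1) = n - (j:ℕ) := by omega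
    rw [if_pos rfl, h2]
  · intro b _ hb
    rw [if_neg, zero_mul]
    intro h
    exact hb (Fin.ext h.symm)
  · intro h
    exact absurd (Finset.mem_univ _) h

lemma Emat_mulVec_last {n : ℕ} (r s : ℂ) (x : Fin (n+1) → ℂ) (j : Fin (n+1))
    (hj : (j:ℕ) = n) : (Emat n r s).mulVec x j = 0 := by
  unfold Matrix.mulVec Emat
  simp only [Matrix.of_apply, dotProduct]
  apply Finset.sum_eq_zero
  intro i _
  rw [if_neg, zero_mul]
  omega

lemma Fmat_mulVec_single {n : ℕ} (r s : ℂ) (m : Fin (n+1)) (hm : (m:ℕ) < n) (c : ℂ) :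
    (Fmat n r s).mulVec (Pi.single m c) =
      Pi.single (⟨(m:ℕ)+1, by omega⟩ : Fin (n+1)) (qint r s ((m:ℕ)+1) * c) := by
  funext j
  unfold Matrix.mulVec Fmat
  simp only [Matrix.of_apply, dotProduct]
  rw [Finset.sum_eq_single m]
  · rw [Pi.single_eq_same]
    by_cases h : (j:ℕ) = (m:ℕ) + 1
    · rw [if_pos h]
      have : j = (⟨(m:ℕ)+1, by omega⟩ : Fin (n+1)) := Fin.ext h
      rw [this, Pi.single_eq_same]
    · rw [if_neg h, Pi.single_eq_of_ne (fun hc => h (by rw [hc])), zero_mul]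
  · intro b _ hb
    rw [Pi.single_eq_of_ne hb, mul_zero]
  · intro h
    exact absurd (Finset.mem_univ _) h

/-- If `r^k ≠ s^k` for all `1 ≤ k ≤ n`, then the only subspaces of `V = ℂ^{n+1}`
invariant under both `E` and `F` are `0` and `V`: the representation `V_n` is irreducible. -/
theorem Vn_irreducible (n : ℕ) (r s : ℂ) (hr : r ≠ 0) (hs : s ≠ 0) (hrs : r ≠ s)
    (hpow : ∀ k : ℕ, 1 ≤ k → k ≤ n → r ^ k ≠ s ^ k)
    (W : Submodule ℂ (Fin (n + 1) → ℂ))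
    (hE : ∀ x ∈ W, (Emat n r s).mulVec x ∈ W)
    (hF : ∀ x ∈ W, (Fmat n r s).mulVec x ∈ W) :
    W = ⊥ ∨ W = ⊤ := by
  by_cases hbot : W = ⊥
  · exact Or.inl hbot
  right
  obtain ⟨x, hxW, hx0⟩ := Submodule.ne_bot_iff W |>.mp hbot
  -- Step 1: descend to a nonzero multiple of e₀
  have claim1 : ∀ m : ℕ, ∀ x ∈ W, x ≠ 0 → (∀ i : Fin (n+1), m < (i:ℕ) → x i = 0) →
      ∃ c : ℂ, c ≠ 0 ∧ Pi.single (0 : Fin (n+1)) c ∈ W := by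
    intro m
    induction m with
    | zero =>
      intro x hxW hx0 hsupp
      refine ⟨x 0, ?_, ?_⟩
      · intro h
        apply hx0
        funext i
        by_cases hi : i = 0
        · rw [hi]; exact h
        · exact hsupp i (Nat.pos_of_ne_zero (fun hc => hi (Fin.ext hc)))
      · have : Pi.single (0 : Fin (n+1)) (x 0) = x := by
          funext i
          by_cases hi : i = 0
          · rw [hi, Pi.single_eq_same]
          · rw [Pi.single_eq_of_ne hi]
            exact (hsupp i (Nat.pos_of_ne_zero (fun hc => hi (Fin.ext hc)))).symm
        rw [this]; exact hxW
    | succ m ih =>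
      intro x hxW hx0 hsupp
      by_cases hmn : m + 1 ≤ n
      · set im : Fin (n+1) := ⟨m+1, by omega⟩ with him
        by_cases hxm : x im = 0
        · apply ih x hxW hx0
          intro i hi
          by_cases h : (i:ℕ) = m + 1
          · have : i = im := Fin.ext h
            rw [this]; exact hxm
          · exact hsupp i (by omega)
        · set y := (Emat n r s).mulVec x with hy
          have hyW : y ∈ W := hE x hxW
          have hym : y ⟨m, by omega⟩ ≠ 0 := by
            rw [hy, Emat_mulVec r s x ⟨m, by omega⟩ (by exact Nat.lt_of_succ_le hmn)]
            have hq : qint r s (n - m) ≠ 0 := qint_ne_zero hrs hpow (by omega) (by omega)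
            exact mul_ne_zero hq hxm
          have hy0 : y ≠ 0 := fun h => hym (by rw [h]; rfl)
          apply ih y hyW hy0
          intro i hi
          by_cases hin : (i:ℕ) = n
          · exact Emat_mulVec_last r s x i hin
          · have hiln : (i:ℕ) < n := by omega
            rw [hy, Emat_mulVec r s x i hiln]
            rw [hsupp ⟨(i:ℕ)+1, by omega⟩ (by simp; omega), mul_zero]
      · apply ih x hxW hx0
        intro i hi
        exact absurd i.isLt (by omega)
  obtain ⟨c, hc0, hcW⟩ := claim1 n x hxW hx0 (fun i hi => absurd i.isLt (by omega))
  have he0 : Pi.single (0 : Fin (n+1)) (1:ℂ) ∈ W := by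
    have := W.smul_mem c⁻¹ hcW
    rwa [← Pi.single_smul, smul_eq_mul, inv_mul_cancel₀ hc0] at this
  -- Step 2: ascend with F
  have claim2 : ∀ m : ℕ, (hm : m ≤ n) →
      Pi.single (⟨m, by omega⟩ : Fin (n+1)) (1:ℂ) ∈ W := by
    intro m
    induction m with
    | zero => intro _; exact he0
    | succ m ih =>
      intro hm
      have hmem := hF _ (ih (by omega))
      rw [Fmat_mulVec_single r s ⟨m, by omega⟩ (by simp only [Fin.val_mk]; omega) 1] at hmem
      have hq : qint r s (m+1) ≠ 0 := qint_ne_zero hrs hpow (by omega) hm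
      have := W.smul_mem (qint r s (m+1))⁻¹ hmem
      rwa [← Pi.single_smul, smul_eq_mul, mul_one, inv_mul_cancel₀ hq] at this
  -- conclude
  rw [eq_top_iff]
  intro v _
  have hv : v = ∑ i : Fin (n+1), Pi.single i (v i) := (Finset.univ_sum_single v).symm
  rw [hv]
  apply Submodule.sum_mem
  intro i _
  have : Pi.single i (v i) = v i • (Pi.single i 1 : Fin (n+1) → ℂ) := by
    rw [← Pi.single_smul, smul_eq_mul, mul_one]
  rw [this]
  apply W.smul_mem
  have := claim2 (i:ℕ) (by omega)
  simpa using this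
end

section
/- For all integers k and k′, the loop operators on the evaluation representation satisfy X⁺(k+1) X⁺(k′) − (r s^{−1}) X⁺(k′) X⁺(k+1) = −( X⁺(k′+1) X⁺(k) − (r s^{−1}) X⁺(k) X⁺(k′+1) ) as operators on V = ℂ^{n+1}. (This is relation (D6) of the Drinfeld realization of U_{r,s}(ŝl₂) for the positive loop generators, verified on the evaluation representation V_n(a).) -/
/-- The loop operator `X⁺(k)` on `V = ℂ^{n+1}`,
`X⁺(k) v_i = a^k s^{−nk} (r s⁻¹)^{−ki} [n+1−i] v_{i−1}` (with `v_{-1} = 0`). -/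
noncomputable def Xp (n : ℕ) (r s a : ℂ) (k : ℤ) : Matrix (Fin (n + 1)) (Fin (n + 1)) ℂ :=
  Matrix.of fun j i =>
    if (j : ℕ) + 1 = (i : ℕ) then
      a ^ k * s ^ (-(n : ℤ) * k) * (r * s⁻¹) ^ (-(k * (i : ℤ))) * qint r s (n + 1 - (i : ℕ))
    else 0

/-!
Both `X⁺(k)` are supported on the superdiagonal, so `X⁺(k) X⁺(k')` is supported two steps above
the diagonal, and comparing exponents shows `X⁺(k) X⁺(k') = q^k Y(k + k')` with `q = r s⁻¹` and
`Y = XpSq` independent of the split of `k + k'`. Both sides of (D6) are therefore multiples of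
`Y(k + k' + 1)`, with the same coefficient `q^{k+1} - q^{k'+1}`.
-/

open Matrix

section Superdiagonal

variable {R : Type*} [Semiring R] {m : ℕ}

def superdiag (m : ℕ) (f : ℕ → R) : Matrix (Fin m) (Fin m) R :=
  of fun j i => if (j : ℕ) + 1 = i then f i else 0

theorem superdiag_mul_superdiag_apply (f g : ℕ → R) (j i : Fin m) :
    (superdiag m f * superdiag m g) j i = if (j : ℕ) + 2 = i then f (j + 1) * g i else 0 := by
  rw [mul_apply]
  split_ifs with h
  · have hj : (j : ℕ) + 1 < m := by omega
    rw [Finset.sum_eq_single_of_mem ⟨(j : ℕ) + 1, hj⟩ (Finset.mem_univ _)]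
    · simp [superdiag, show (j : ℕ) + 1 + 1 = i by omega]
    · intro b _ hb
      have hb' : (j : ℕ) + 1 ≠ b := fun hjb => hb (Fin.ext hjb.symm)
      simp [superdiag, hb']
  · refine Finset.sum_eq_zero fun b _ => ?_
    simp only [superdiag, of_apply]
    split_ifs <;> first | omega | simp

end Superdiagonal

theorem Xp_eq_superdiag (n : ℕ) (r s a : ℂ) (k : ℤ) :
    Xp n r s a k = superdiag (n + 1) fun i =>
      a ^ k * s ^ (-(n : ℤ) * k) * (r * s⁻¹) ^ (-(k * (i : ℤ))) * qint r s (n + 1 - i) :=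
  rfl

noncomputable def XpSq (n : ℕ) (r s a : ℂ) (m : ℤ) : Matrix (Fin (n + 1)) (Fin (n + 1)) ℂ :=
  of fun j i =>
    if (j : ℕ) + 2 = i then
      a ^ m * s ^ (-(n : ℤ) * m) * (r * s⁻¹) ^ (-(m * (i : ℤ))) *
        (qint r s (n - j) * qint r s (n + 1 - i))
    else 0

theorem zpow_weight_mul {a s q : ℂ} (ha : a ≠ 0) (hs : s ≠ 0) (hq : q ≠ 0) (N j k k' : ℤ)
    (x y : ℂ) :
    a ^ k * s ^ (-N * k) * q ^ (-(k * (j + 1))) * x *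
        (a ^ k' * s ^ (-N * k') * q ^ (-(k' * (j + 2))) * y) =
      q ^ k * (a ^ (k + k') * s ^ (-N * (k + k')) * q ^ (-((k + k') * (j + 2))) * (x * y)) := by
  have hq' : q ^ k * q ^ (-((k + k') * (j + 2))) =
      q ^ (-(k * (j + 1))) * q ^ (-(k' * (j + 2))) := by
    rw [← zpow_add₀ hq, ← zpow_add₀ hq]; ring_nf
  rw [zpow_add₀ ha, show -N * (k + k') = -N * k + -N * k' by ring, zpow_add₀ hs]
  linear_combination -(a ^ k * a ^ k' * s ^ (-N * k) * s ^ (-N * k') * x * y) * hq'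

theorem Xp_mul_Xp {r s a : ℂ} (hr : r ≠ 0) (hs : s ≠ 0) (ha : a ≠ 0) (n : ℕ) (k k' : ℤ) :
    Xp n r s a k * Xp n r s a k' = (r * s⁻¹) ^ k • XpSq n r s a (k + k') := by
  ext j i
  rw [Xp_eq_superdiag, Xp_eq_superdiag, superdiag_mul_superdiag_apply, Matrix.smul_apply, XpSq,
    of_apply]
  split_ifs with h
  · have hi : ((i : ℕ) : ℤ) = (j : ℤ) + 2 := by omega
    rw [hi, Nat.cast_add, Nat.cast_one, show n + 1 - ((j : ℕ) + 1) = n - j by omega, smul_eq_mul]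
    exact zpow_weight_mul ha hs (mul_ne_zero hr (inv_ne_zero hs)) _ _ _ _ _ _
  · simp

theorem D6_positive_on_evaluation_general (n : ℕ) (r s a : ℂ) (hr : r ≠ 0) (hs : s ≠ 0) (ha : a ≠ 0)
    (k k' : ℤ) :
    Xp n r s a (k + 1) * Xp n r s a k' - (r * s⁻¹) • (Xp n r s a k' * Xp n r s a (k + 1))
      = -(Xp n r s a (k' + 1) * Xp n r s a k
          - (r * s⁻¹) • (Xp n r s a k * Xp n r s a (k' + 1))) := by
  have hq : r * s⁻¹ ≠ 0 := mul_ne_zero hr (inv_ne_zero hs)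
  rw [Xp_mul_Xp hr hs ha, Xp_mul_Xp hr hs ha, Xp_mul_Xp hr hs ha, Xp_mul_Xp hr hs ha,
    show k' + (k + 1) = k + 1 + k' by ring, show k' + 1 + k = k + 1 + k' by ring,
    show k + (k' + 1) = k + 1 + k' by ring, zpow_add_one₀ hq, zpow_add_one₀ hq]
  module

/-- Relation (D6) of the Drinfeld realization of `U_{r,s}(ŝl₂)` for the positive loop
generators, on the evaluation representation `V_n(a)`: for all integers `k, k′`,
`X⁺(k+1)X⁺(k′) − (rs⁻¹)X⁺(k′)X⁺(k+1) = −(X⁺(k′+1)X⁺(k) − (rs⁻¹)X⁺(k)X⁺(k′+1))`. -/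
theorem D6_positive_on_evaluation (n : ℕ) (r s a : ℂ) (hr : r ≠ 0) (hs : s ≠ 0) (ha : a ≠ 0)
    (hrs : r ≠ s) (k k' : ℤ) :
    Xp n r s a (k + 1) * Xp n r s a k' - (r * s⁻¹) • (Xp n r s a k' * Xp n r s a (k + 1))
      = -(Xp n r s a (k' + 1) * Xp n r s a k
          - (r * s⁻¹) • (Xp n r s a k * Xp n r s a (k' + 1))) :=
  D6_positive_on_evaluation_general n r s a hr hs ha k k'
end

section
/- For all integers k and k′, the loop operators on the evaluation representation satisfy X⁻(k+1) X⁻(k′) − (r^{−1} s) X⁻(k′) X⁻(k+1) = −( X⁻(k′+1) X⁻(k) − (r^{−1} s) X⁻(k) X⁻(k′+1) ) as operators on V = ℂ^{n+1}. (This is relation (D6) of the Drinfeld realization of U_{r,s}(ŝl₂) for the negative loop generators, verified on the evaluation representation V_n(a).) -/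
/-- The loop operator `X⁻(k)` on `V = ℂ^{n+1}`,
`X⁻(k) v_i = a^k r^{nk} (r s⁻¹)^{−k(i+1)} [i+1] v_{i+1}` (with `v_{n+1} = 0`). -/
noncomputable def Xm (n : ℕ) (r s a : ℂ) (k : ℤ) : Matrix (Fin (n + 1)) (Fin (n + 1)) ℂ :=
  Matrix.of fun j i =>
    if (j : ℕ) = (i : ℕ) + 1 then
      a ^ k * r ^ ((n : ℤ) * k) * (r * s⁻¹) ^ (-(k * ((i : ℤ) + 1))) * qint r s ((i : ℕ) + 1)
    else 0

/-!
Write `t = r s⁻¹`. `X⁻(k)` shifts `v_i` to `v_{i+1}` with weight `λ^k t^{-k(i+1)} [i+1]`, where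
`λ = a rⁿ`, so `X⁻(k₁) X⁻(k₂)` sends `v_i` to `λ^m t^{-m(i+1)} t^{-k₁} [i+2][i+1] v_{i+2}` with
`m = k₁ + k₂`: for a fixed sum `m` the product depends on `k₁` only through the scalar `t^{-k₁}`.
All four products in (D6) have `m = k + k' + 1`, and both sides become `(1 - t^{k-k'})` times
`X⁻(k+1) X⁻(k')`.
-/

section WeightedShift

variable {R : Type*} [Semiring R]

def weightedShift (n : ℕ) (f : ℕ → R) : Matrix (Fin (n + 1)) (Fin (n + 1)) R :=
  Matrix.of fun j i => if (j : ℕ) = (i : ℕ) + 1 then f i else 0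

theorem weightedShift_mul_weightedShift_apply {n : ℕ} (f g : ℕ → R) (j i : Fin (n + 1)) :
    (weightedShift n f * weightedShift n g) j i =
      if (j : ℕ) = (i : ℕ) + 2 then f ((i : ℕ) + 1) * g i else 0 := by
  rw [Matrix.mul_apply]
  by_cases hi : (i : ℕ) + 1 < n + 1
  · rw [Finset.sum_eq_single_of_mem ⟨(i : ℕ) + 1, hi⟩ (Finset.mem_univ _)]
    · by_cases hj : (j : ℕ) = (i : ℕ) + 2 <;> simp [weightedShift, hj]
    · intro b _ hb
      have : (b : ℕ) ≠ (i : ℕ) + 1 := fun h => hb (Fin.ext h)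
      simp [weightedShift, this]
  · have hj : (j : ℕ) ≠ (i : ℕ) + 2 := by omega
    refine (Finset.sum_eq_zero fun b _ => ?_).trans (if_neg hj).symm
    have : (b : ℕ) ≠ (i : ℕ) + 1 := by omega
    simp [weightedShift, this]

end WeightedShift

theorem Xm_eq_weightedShift (n : ℕ) (r s a : ℂ) (k : ℤ) :
    Xm n r s a k = weightedShift n fun i =>
      a ^ k * r ^ ((n : ℤ) * k) * (r * s⁻¹) ^ (-(k * ((i : ℤ) + 1))) * qint r s (i + 1) :=
  rfl

theorem Xm_mul_Xm_of_add_eq {n : ℕ} {r s a : ℂ} (hr : r ≠ 0) (hs : s ≠ 0) (ha : a ≠ 0)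
    {k₁ k₂ l₁ l₂ : ℤ} (h : k₁ + k₂ = l₁ + l₂) :
    Xm n r s a k₁ * Xm n r s a k₂ = (r * s⁻¹) ^ (l₁ - k₁) • (Xm n r s a l₁ * Xm n r s a l₂) := by
  set t := r * s⁻¹
  have ht : t ≠ 0 := mul_ne_zero hr (inv_ne_zero hs)
  ext j i
  simp only [Xm_eq_weightedShift, Matrix.smul_apply, weightedShift_mul_weightedShift_apply]
  split_ifs
  · push_cast
    have ha' : a ^ k₁ * a ^ k₂ = a ^ l₁ * a ^ l₂ := by
      rw [← zpow_add₀ ha, ← zpow_add₀ ha, h]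
    have hr' : r ^ ((n : ℤ) * k₁) * r ^ ((n : ℤ) * k₂) = r ^ ((n : ℤ) * l₁) * r ^ ((n : ℤ) * l₂) := by
      rw [← zpow_add₀ hr, ← zpow_add₀ hr, ← mul_add, ← mul_add, h]
    have ht' : t ^ (-(k₁ * ((i : ℤ) + 1 + 1))) * t ^ (-(k₂ * ((i : ℤ) + 1))) =
        t ^ (l₁ - k₁) * (t ^ (-(l₁ * ((i : ℤ) + 1 + 1))) * t ^ (-(l₂ * ((i : ℤ) + 1)))) := by
      rw [← zpow_add₀ ht, ← zpow_add₀ ht, ← zpow_add₀ ht]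
      congr 1
      linear_combination (-(i : ℤ) - 1) * h
    calc _ = (a ^ k₁ * a ^ k₂) * (r ^ ((n : ℤ) * k₁) * r ^ ((n : ℤ) * k₂)) *
          (t ^ (-(k₁ * ((i : ℤ) + 1 + 1))) * t ^ (-(k₂ * ((i : ℤ) + 1)))) *
          (qint r s ((i : ℕ) + 1 + 1) * qint r s ((i : ℕ) + 1)) := by ring
      _ = _ := by rw [ha', hr', ht']; ring
  · simp

theorem D6_negative_on_evaluation_general (n : ℕ) (r s a : ℂ) (hr : r ≠ 0) (hs : s ≠ 0) (ha : a ≠ 0)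
    (k k' : ℤ) :
    Xm n r s a (k + 1) * Xm n r s a k' - (r⁻¹ * s) • (Xm n r s a k' * Xm n r s a (k + 1))
      = -(Xm n r s a (k' + 1) * Xm n r s a k
          - (r⁻¹ * s) • (Xm n r s a k * Xm n r s a (k' + 1))) := by
  set P := Xm n r s a (k + 1) * Xm n r s a k'
  have hP {k₁ k₂ : ℤ} (h : k₁ + k₂ = k + 1 + k') :
      Xm n r s a k₁ * Xm n r s a k₂ = (r * s⁻¹) ^ (k + 1 - k₁) • P :=
    Xm_mul_Xm_of_add_eq hr hs ha h
  rw [hP (k₁ := k') (by ring), hP (k₁ := k' + 1) (by ring), hP (k₁ := k) (by ring),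
    show k + 1 - k' = k - k' + 1 by ring, show k + 1 - (k' + 1) = k - k' by ring,
    show k + 1 - k = 1 by ring, zpow_add_one₀ (mul_ne_zero hr (inv_ne_zero hs)), zpow_one]
  have hinv : r⁻¹ * s * (r * s⁻¹) = 1 := by field_simp
  linear_combination (norm := module) (-1 - (r * s⁻¹) ^ (k - k')) • hinv • P

/-- Relation (D6) of the Drinfeld realization of `U_{r,s}(ŝl₂)` for the negative loop
generators, on the evaluation representation `V_n(a)`: for all integers `k, k′`,
`X⁻(k+1)X⁻(k′) − (r⁻¹s)X⁻(k′)X⁻(k+1) = −(X⁻(k′+1)X⁻(k) − (r⁻¹s)X⁻(k)X⁻(k′+1))`. -/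
theorem D6_negative_on_evaluation (n : ℕ) (r s a : ℂ) (hr : r ≠ 0) (hs : s ≠ 0) (ha : a ≠ 0)
    (hrs : r ≠ s) (k k' : ℤ) :
    Xm n r s a (k + 1) * Xm n r s a k' - (r⁻¹ * s) • (Xm n r s a k' * Xm n r s a (k + 1))
      = -(Xm n r s a (k' + 1) * Xm n r s a k
          - (r⁻¹ * s) • (Xm n r s a k * Xm n r s a (k' + 1))) :=
  D6_negative_on_evaluation_general n r s a hr hs ha k k'
end

section
/- For every integer k, one has the operator identities X⁺(k) = (r^{−1} s a)^k (K′)^{−k} E and X⁻(k) = (r^{−1} s a)^k F K^{k} on V = ℂ^{n+1}. (This verifies, on the evaluation representation V_n(a), the formulas ev_a(x⁺(k)) = r^{−k} s^k a^k ω′^{−k} e and ev_a(x⁻(k)) = r^{−k} s^k a^k f ω^{k} for the lift of the evaluation morphism to the Drinfeld realization of U_{r,s}(ŝl₂).) -/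
/-!
On the basis `v_i`, both sides of each identity have the same off-diagonal support, and the
diagonal operators `K`, `K′` are invertible with `K^k v_i = (r^{n-i} s^i)^k v_i`. The identity thus
reduces entrywise to one between Laurent monomials in `r` and `s` (times `a^k`), which is a
comparison of integer exponents in the commutative group generated by `r` and `s`.
-/

theorem Matrix.diagonal_zpow {n K : Type*} [Fintype n] [DecidableEq n] [Field K] {d : n → K}
    (hd : ∀ i, d i ≠ 0) (k : ℤ) : Matrix.diagonal d ^ k = Matrix.diagonal fun i => d i ^ k := by
  cases k with
  | ofNat m => simp [Matrix.diagonal_pow]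
  | negSucc m =>
    rw [zpow_negSucc, Matrix.diagonal_pow]
    refine Matrix.inv_eq_left_inv ?_
    rw [Matrix.diagonal_mul_diagonal, ← Matrix.diagonal_one]
    congr 1
    ext i
    simp [zpow_negSucc, hd i]

section CommGroup

variable {G : Type*} [CommGroup G] (r s : G) (k n j : ℤ)

theorem Xp_coeff_eq :
    s ^ (-n * k) * (r * s⁻¹) ^ (-(k * (j + 1))) = (r⁻¹ * s) ^ k * (r ^ j * s ^ (n - j)) ^ (-k) :=
  Additive.ofMul.injective <| by
    simp only [ofMul_mul, ofMul_zpow, ofMul_inv]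
    module

theorem Xm_coeff_eq :
    r ^ (n * k) * (r * s⁻¹) ^ (-(k * (j + 1))) = (r⁻¹ * s) ^ k * (r ^ (n - j) * s ^ j) ^ k :=
  Additive.ofMul.injective <| by
    simp only [ofMul_mul, ofMul_zpow, ofMul_inv]
    module

end CommGroup

section Field

variable {K : Type*} [Field K] {r s : K} (a : K) (k : ℤ) {n j : ℕ}

theorem Xp_coeff_eq₀ (hr : r ≠ 0) (hs : s ≠ 0) (hj : j ≤ n) :
    a ^ k * s ^ (-(n : ℤ) * k) * (r * s⁻¹) ^ (-(k * ((j : ℤ) + 1))) =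
      (r⁻¹ * s * a) ^ k * (r ^ j * s ^ (n - j)) ^ (-k) := by
  lift r to Kˣ using hr.isUnit
  lift s to Kˣ using hs.isUnit
  have h := congrArg Units.val (Xp_coeff_eq r s k n j)
  push_cast [← Nat.cast_sub hj, zpow_natCast] at h
  rw [mul_assoc, h, mul_zpow _ a]
  ring

theorem Xm_coeff_eq₀ (hr : r ≠ 0) (hs : s ≠ 0) (hj : j ≤ n) :
    a ^ k * r ^ ((n : ℤ) * k) * (r * s⁻¹) ^ (-(k * ((j : ℤ) + 1))) =
      (r⁻¹ * s * a) ^ k * (r ^ (n - j) * s ^ j) ^ k := by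
  lift r to Kˣ using hr.isUnit
  lift s to Kˣ using hs.isUnit
  have h := congrArg Units.val (Xm_coeff_eq r s k n j)
  push_cast [← Nat.cast_sub hj, zpow_natCast] at h
  rw [mul_assoc, h, mul_zpow _ a]
  ring

end Field

theorem evaluation_morphism_formulas_general (n : ℕ) (r s a : ℂ) (hr : r ≠ 0) (hs : s ≠ 0)
    (k : ℤ) :
    Xp n r s a k = (r⁻¹ * s * a) ^ k • (K'mat n r s ^ (-k) * Emat n r s) ∧
    Xm n r s a k = (r⁻¹ * s * a) ^ k • (Fmat n r s * Kmat n r s ^ k) := by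
  have hweight (i j : ℕ) : r ^ i * s ^ j ≠ 0 := mul_ne_zero (pow_ne_zero _ hr) (pow_ne_zero _ hs)
  rw [K'mat, Kmat, Matrix.diagonal_zpow (fun _ => hweight _ _),
    Matrix.diagonal_zpow (fun _ => hweight _ _)]
  constructor <;> ext p q
  · simp only [Xp, Emat, Matrix.smul_apply, Matrix.diagonal_mul, Matrix.of_apply, smul_eq_mul,
      mul_ite, mul_zero]
    split_ifs with h
    · rw [← h, ← mul_assoc, Nat.cast_add_one, Xp_coeff_eq₀ a k hr hs (Fin.is_le p)]
    · rfl
  · simp only [Xm, Fmat, Matrix.smul_apply, Matrix.mul_diagonal, Matrix.of_apply, smul_eq_mul,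
      ite_mul, mul_ite, zero_mul, mul_zero]
    split_ifs
    · rw [Xm_coeff_eq₀ a k hr hs (Fin.is_le q)]
      ring
    · rfl

/-- On the evaluation representation `V_n(a)`: for every integer `k`,
`X⁺(k) = (r⁻¹ s a)^k (K′)^{−k} E` and `X⁻(k) = (r⁻¹ s a)^k F K^k`, verifying the formulas
`ev_a(x⁺(k)) = r^{−k} s^k a^k ω′^{−k} e` and `ev_a(x⁻(k)) = r^{−k} s^k a^k f ω^k`. -/
theorem evaluation_morphism_formulas (n : ℕ) (r s a : ℂ) (hr : r ≠ 0) (hs : s ≠ 0)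
    (ha : a ≠ 0) (hrs : r ≠ s) (k : ℤ) :
    Xp n r s a k = (r⁻¹ * s * a) ^ k • (K'mat n r s ^ (-k) * Emat n r s) ∧
    Xm n r s a k = (r⁻¹ * s * a) ^ k • (Fmat n r s * Kmat n r s ^ k) :=
  evaluation_morphism_formulas_general n r s a hr hs k
end

section
/- In the ring of formal power series ℂ[[z]] the following identity holds: P(rz) · ( r^n + Σ_{k≥1} (r^n − s^n)(a r^{−1} s^{1−n})^k z^k ) = r^n · P(sz), where P(z) = ∏_{k=1}^{n} (1 − a r^{−k−1} s^{k−n} z). Equivalently, the generating function Σ_{k≥0} Φ_k^+ z^k of the highest weight eigenvalues of the evaluation representation V_n(a) equals r^{deg P} P(sz)/P(rz). -/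
open PowerSeries Finset

/-! With `q = a r⁻¹ s^{1-n}` and `ρ = s / r`, the factors of `P(rz)` are `1 - q ρ^j z` for `j < n`
and those of `P(sz)` are `1 - q ρ^{j+1} z`, so the two products share all but one factor each.
The series is `r^n - (r^n - s^n) + (r^n - s^n) / (1 - qz)`, so multiplying it by the extra factor
`1 - qz` of `P(rz)` gives `r^n - s^n q z = r^n (1 - q ρ^n z)`, the extra factor of `P(sz)`. -/

theorem Finset.prod_Icc_one_eq_prod_range {M : Type*} [CommMonoid M] (f : ℕ → M) (n : ℕ) :
    ∏ k ∈ Icc 1 n, f k = ∏ j ∈ range n, f (j + 1) := by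
  rw [range_eq_Ico, prod_Ico_add' f 0 n 1, zero_add, Ico_add_one_right_eq_Icc]

namespace PowerSeries

variable {R : Type*} [CommRing R]

theorem one_sub_C_mul_X_mul_mk_pow (q : R) : (1 - C q * X) * mk (q ^ ·) = 1 := by
  simpa [rescale_mk, rescale_X, mul_comm] using
    congrArg (rescale q) (mk_one_mul_one_sub_eq_one R)

theorem mk_ite_zero_eq (t u q : R) :
    mk (fun k => if k = 0 then t else u * q ^ k) = C (t - u) + C u * mk (q ^ ·) := by
  ext (_ | k) <;> simp

theorem one_sub_C_mul_X_mul_mk_ite_zero (t u q : R) :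
    (1 - C q * X) * mk (fun k => if k = 0 then t else u * q ^ k)
      = C t - C ((t - u) * q) * X := by
  rw [mk_ite_zero_eq, mul_add, mul_left_comm, one_sub_C_mul_X_mul_mk_pow, map_mul, map_sub]
  ring

theorem prod_one_sub_geom_mul_mk_ite_zero {q ρ t u : R} (n : ℕ) (h : t * ρ ^ n = t - u) :
    (∏ j ∈ range n, (1 - C (q * ρ ^ j) * X)) * mk (fun k => if k = 0 then t else u * q ^ k)
      = C t * ∏ j ∈ range n, (1 - C (q * ρ ^ (j + 1)) * X) := by
  set g : ℕ → R⟦X⟧ := fun j => 1 - C (q * ρ ^ j) * X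
  have hg0 : g 0 = 1 - C q * X := by simp [g]
  have hfirst : g 0 * mk (fun k => if k = 0 then t else u * q ^ k) = C t * g n := by
    rw [hg0, one_sub_C_mul_X_mul_mk_ite_zero, ← h]
    simp only [g, map_mul]
    ring
  have hunit : IsUnit (g 0) := hg0 ▸ .of_mul_eq_one _ (one_sub_C_mul_X_mul_mk_pow q)
  apply hunit.mul_left_cancel
  calc g 0 * ((∏ j ∈ range n, g j) * mk _)
      = C t * ((∏ j ∈ range n, g j) * g n) := by rw [mul_left_comm, hfirst]; ring
    _ = g 0 * (C t * ∏ j ∈ range n, g (j + 1)) := by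
      rw [← prod_range_succ, prod_range_succ']; ring

end PowerSeries

theorem mul_zpow_neg_sub_one_mul_zpow_sub_succ {K : Type*} [Field K] {r s : K} (hr : r ≠ 0)
    (hs : s ≠ 0) (a : K) (n j : ℕ) :
    a * r ^ (-((j + 1 : ℕ) : ℤ) - 1) * s ^ (((j + 1 : ℕ) : ℤ) - n)
      = a * r⁻¹ * s ^ (1 - (n : ℤ)) * (s / r) ^ j / r := by
  rw [show -((j + 1 : ℕ) : ℤ) - 1 = -1 - (j : ℤ) - 1 by push_cast; ring,
    show ((j + 1 : ℕ) : ℤ) - n = (1 - n) + (j : ℤ) by push_cast; ring,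
    zpow_sub₀ hr, zpow_sub₀ hr, zpow_add₀ hs, zpow_natCast, zpow_natCast, zpow_neg_one, div_pow]
  field_simp

theorem generating_function_positive_general (n : ℕ) (r s a : ℂ) (hr : r ≠ 0) (hs : s ≠ 0) :
    (∏ k ∈ Finset.Icc 1 n,
        (1 - PowerSeries.C (a * r ^ (-(k : ℤ) - 1) * s ^ ((k : ℤ) - (n : ℤ)) * r)
          * PowerSeries.X))
      * PowerSeries.mk (fun k =>
          if k = 0 then r ^ n
          else (r ^ n - s ^ n) * (a * r⁻¹ * s ^ ((1 : ℤ) - (n : ℤ))) ^ k)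
    = PowerSeries.C (r ^ n)
      * ∏ k ∈ Finset.Icc 1 n,
          (1 - PowerSeries.C (a * r ^ (-(k : ℤ) - 1) * s ^ ((k : ℤ) - (n : ℤ)) * s)
            * PowerSeries.X) := by
  set q := a * r⁻¹ * s ^ ((1 : ℤ) - (n : ℤ))
  have hfactor_r : ∀ j : ℕ, a * r ^ (-((j + 1 : ℕ) : ℤ) - 1) * s ^ (((j + 1 : ℕ) : ℤ) - n) * r
      = q * (s / r) ^ j := fun j => by
    rw [mul_zpow_neg_sub_one_mul_zpow_sub_succ hr hs, div_mul_cancel₀ _ hr]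
  have hfactor_s : ∀ j : ℕ, a * r ^ (-((j + 1 : ℕ) : ℤ) - 1) * s ^ (((j + 1 : ℕ) : ℤ) - n) * s
      = q * (s / r) ^ (j + 1) := fun j => by
    rw [mul_zpow_neg_sub_one_mul_zpow_sub_succ hr hs, pow_succ]; ring
  rw [prod_Icc_one_eq_prod_range, prod_Icc_one_eq_prod_range]
  simp only [hfactor_r, hfactor_s]
  exact prod_one_sub_geom_mul_mk_ite_zero n (by rw [div_pow]; field_simp; ring)

/-- In `ℂ[[z]]`:
`P(rz)·(r^n + Σ_{k≥1} (r^n − s^n)(a r^{−1} s^{1−n})^k z^k) = r^n · P(sz)`, where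
`P(z) = ∏_{k=1}^{n} (1 − a r^{−k−1} s^{k−n} z)`; i.e. the generating function
`Σ_{k≥0} Φ_k^+ z^k` of the highest weight eigenvalues of `V_n(a)` equals
`r^{deg P} P(sz)/P(rz)`. -/
theorem generating_function_positive (n : ℕ) (r s a : ℂ) (hr : r ≠ 0) (hs : s ≠ 0)
    (ha : a ≠ 0) (hrs : r ≠ s) :
    (∏ k ∈ Finset.Icc 1 n,
        (1 - PowerSeries.C (a * r ^ (-(k : ℤ) - 1) * s ^ ((k : ℤ) - (n : ℤ)) * r)
          * PowerSeries.X))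
      * PowerSeries.mk (fun k =>
          if k = 0 then r ^ n
          else (r ^ n - s ^ n) * (a * r⁻¹ * s ^ ((1 : ℤ) - (n : ℤ))) ^ k)
    = PowerSeries.C (r ^ n)
      * ∏ k ∈ Finset.Icc 1 n,
          (1 - PowerSeries.C (a * r ^ (-(k : ℤ) - 1) * s ^ ((k : ℤ) - (n : ℤ)) * s)
            * PowerSeries.X) :=
  generating_function_positive_general n r s a hr hs
end

section
/- For every natural number n and every 0 ≤ i ≤ n, the following identity of polynomials in ℂ[u] holds: r^{n−i} s^{i} (1 − a r^{−i} s^{i−n} u)(1 − a r^{1−i} s^{i−n−1} u) + (r − s)[i+1][n−i] · a r^{−i} s^{i−n} u · (1 − a r^{1−i} s^{i−n−1} u) − (r − s)[i][n+1−i] · a r^{1−i} s^{i−n−1} u · (1 − a r^{−i} s^{i−n} u) = r^{n−i} s^{i} (1 − a r s^{−n−1} u)(1 − a r^{−n} u). -/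
/-!
Every linear factor in `u` is a monomial multiple of `w = a r^{-i} s^{i-n} u`: the second
factor is `w r/s`, and those on the right are `w (r/s)^{i+1}` and `w (s/r)^{n-i}`. Together
with `(r - s)[m][k] = (r^m - s^m)(r^k - s^k)/(r - s)` this turns the claim, with `n = i + j`,
into an identity of rational functions in `r`, `s`, `w` that clears to a polynomial identity.
-/

theorem eigenvalue_identity_field {K : Type*} [Field K] {r s : K} (hr : r ≠ 0) (hs : s ≠ 0)
    (hrs : r ≠ s) (i j : ℕ) (w : K) :
    r ^ j * s ^ i * (1 - w) * (1 - w * r / s)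
      + (r ^ (i + 1) - s ^ (i + 1)) * (r ^ j - s ^ j) / (r - s) * w * (1 - w * r / s)
      - (r ^ i - s ^ i) * (r ^ (j + 1) - s ^ (j + 1)) / (r - s) * (w * r / s) * (1 - w)
    = r ^ j * s ^ i * (1 - w * r ^ (i + 1) / s ^ (i + 1)) * (1 - w * s ^ j / r ^ j) := by
  have hrs' : r - s ≠ 0 := sub_ne_zero.mpr hrs
  field_simp
  ring

theorem sub_mul_qint_mul_qint {r s : ℂ} (hrs : r ≠ s) (m k : ℕ) :
    (r - s) * qint r s m * qint r s k = (r ^ m - s ^ m) * (r ^ k - s ^ k) / (r - s) := by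
  have hrs' : r - s ≠ 0 := sub_ne_zero.mpr hrs
  unfold qint
  field_simp

theorem eigenvalue_rational_identity_general (r s a : ℂ) (hr : r ≠ 0) (hs : s ≠ 0)
    (hrs : r ≠ s) (n i : ℕ) (hi : i ≤ n) (u : ℂ) :
    r ^ ((n : ℤ) - (i : ℤ)) * s ^ (i : ℕ)
        * (1 - a * r ^ (-(i : ℤ)) * s ^ ((i : ℤ) - (n : ℤ)) * u)
        * (1 - a * r ^ ((1 : ℤ) - (i : ℤ)) * s ^ ((i : ℤ) - (n : ℤ) - 1) * u)
      + (r - s) * qint r s (i + 1) * qint r s (n - i)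
        * (a * r ^ (-(i : ℤ)) * s ^ ((i : ℤ) - (n : ℤ)) * u)
        * (1 - a * r ^ ((1 : ℤ) - (i : ℤ)) * s ^ ((i : ℤ) - (n : ℤ) - 1) * u)
      - (r - s) * qint r s i * qint r s (n + 1 - i)
        * (a * r ^ ((1 : ℤ) - (i : ℤ)) * s ^ ((i : ℤ) - (n : ℤ) - 1) * u)
        * (1 - a * r ^ (-(i : ℤ)) * s ^ ((i : ℤ) - (n : ℤ)) * u)
    = r ^ ((n : ℤ) - (i : ℤ)) * s ^ (i : ℕ)
        * (1 - a * r * s ^ (-(n : ℤ) - 1) * u) * (1 - a * r ^ (-(n : ℤ)) * u) := by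
  obtain ⟨j, rfl⟩ := Nat.exists_eq_add_of_le hi
  set w := a * r ^ (-(i : ℤ)) * s ^ (-(j : ℤ)) * u with hw
  have hw_eq : a * r ^ (-(i : ℤ)) * s ^ ((i : ℤ) - ((i + j : ℕ) : ℤ)) * u = w := by
    rw [hw]
    push_cast
    ring_nf
  have hwr_eq : a * r ^ ((1 : ℤ) - (i : ℤ)) * s ^ ((i : ℤ) - ((i + j : ℕ) : ℤ) - 1) * u
      = w * r / s := by
    rw [hw, show (i : ℤ) - ((i + j : ℕ) : ℤ) - 1 = -(j : ℤ) - 1 by push_cast; ring]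
    simp only [zpow_sub₀ hr, zpow_sub₀ hs, zpow_neg, zpow_natCast, zpow_one]
    field_simp
  have hw_rs_pow : a * r * s ^ (-((i + j : ℕ) : ℤ) - 1) * u = w * r ^ (i + 1) / s ^ (i + 1) := by
    rw [hw]
    push_cast
    simp only [neg_add, zpow_sub₀ hs, zpow_add₀ hs, zpow_neg, zpow_natCast, zpow_one]
    field_simp
    ring
  have hw_sr_pow : a * r ^ (-((i + j : ℕ) : ℤ)) * u = w * s ^ j / r ^ j := by
    rw [hw]
    push_cast
    simp only [neg_add, zpow_add₀ hr, zpow_neg, zpow_natCast]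
    field_simp
  have hr_pow : r ^ (((i + j : ℕ) : ℤ) - (i : ℤ)) = r ^ j := by
    rw [show ((i + j : ℕ) : ℤ) - i = j by push_cast; ring, zpow_natCast]
  rw [hw_eq, hwr_eq, hw_rs_pow, hw_sr_pow, hr_pow, sub_mul_qint_mul_qint hrs,
    sub_mul_qint_mul_qint hrs, Nat.add_sub_cancel_left, show i + j + 1 - i = j + 1 by omega]
  exact eigenvalue_identity_field hr hs hrs i j w

/-- For every `n` and `0 ≤ i ≤ n`, the identity of polynomials in `ℂ[u]`:
`r^{n−i} s^i (1 − a r^{−i} s^{i−n} u)(1 − a r^{1−i} s^{i−n−1} u)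
 + (r−s)[i+1][n−i]·a r^{−i} s^{i−n} u·(1 − a r^{1−i} s^{i−n−1} u)
 − (r−s)[i][n+1−i]·a r^{1−i} s^{i−n−1} u·(1 − a r^{−i} s^{i−n} u)
 = r^{n−i} s^i (1 − a r s^{−n−1} u)(1 − a r^{−n} u)`. -/
theorem eigenvalue_rational_identity (r s a : ℂ) (hr : r ≠ 0) (hs : s ≠ 0) (ha : a ≠ 0)
    (hrs : r ≠ s) (n i : ℕ) (hi : i ≤ n) (u : ℂ) :
    r ^ ((n : ℤ) - (i : ℤ)) * s ^ (i : ℕ)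
        * (1 - a * r ^ (-(i : ℤ)) * s ^ ((i : ℤ) - (n : ℤ)) * u)
        * (1 - a * r ^ ((1 : ℤ) - (i : ℤ)) * s ^ ((i : ℤ) - (n : ℤ) - 1) * u)
      + (r - s) * qint r s (i + 1) * qint r s (n - i)
        * (a * r ^ (-(i : ℤ)) * s ^ ((i : ℤ) - (n : ℤ)) * u)
        * (1 - a * r ^ ((1 : ℤ) - (i : ℤ)) * s ^ ((i : ℤ) - (n : ℤ) - 1) * u)
      - (r - s) * qint r s i * qint r s (n + 1 - i)
        * (a * r ^ ((1 : ℤ) - (i : ℤ)) * s ^ ((i : ℤ) - (n : ℤ) - 1) * u)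
        * (1 - a * r ^ (-(i : ℤ)) * s ^ ((i : ℤ) - (n : ℤ)) * u)
    = r ^ ((n : ℤ) - (i : ℤ)) * s ^ (i : ℕ)
        * (1 - a * r * s ^ (-(n : ℤ) - 1) * u) * (1 - a * r ^ (-(n : ℤ)) * u) :=
  eigenvalue_rational_identity_general r s a hr hs hrs n i hi u
end
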